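/- arXiv:1512.01876 — 5 statements merged into one kernel-verified Lean document; each statement's English description precedes it below -/
import Mathlib

section
/- Let P = ⟨p_1,…,p_m⟩ and Q = ⟨q_1,…,q_n⟩ be point sequences in ℝ^d. The minimum of Σ_{(i,j)∈C} ‖p_i − q_j‖ over all monotone correspondence sets C that cover P and Q equals the minimum of Σ_{(i,j)∈π} ‖p_i − q_j‖ over all admissible paths π from (1,1) to (m,n). (That is, the correspondence formulation and the grid-path formulation of dynamic time warping coincide.) -/
/-- A step of an admissible path: each coordinate increases by 0 or 1, not both by 0. -/
def IsStep (p q : ℕ × ℕ) : Prop :=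
  (q.1 = p.1 ∨ q.1 = p.1 + 1) ∧ (q.2 = p.2 ∨ q.2 = p.2 + 1) ∧ q ≠ p

/-- Membership in the grid `[1..m] × [1..n]`. -/
def InGrid (m n : ℕ) (p : ℕ × ℕ) : Prop :=
  1 ≤ p.1 ∧ p.1 ≤ m ∧ 1 ≤ p.2 ∧ p.2 ≤ n

/-- An admissible path from `s` to `t` in the grid `[1..m] × [1..n]`. -/
def IsAdmissible (m n : ℕ) (s t : ℕ × ℕ) (π : List (ℕ × ℕ)) : Prop :=
  π.head? = some s ∧ π.getLast? = some t ∧ List.Chain' IsStep π ∧ ∀ p ∈ π, InGrid m n p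

/-- The sum of the weights `ω(i,j) = ‖p_i - q_j‖` of the grid points along a path. -/
noncomputable def pathCost {d : ℕ} (P Q : ℕ → EuclideanSpace ℝ (Fin d))
    (π : List (ℕ × ℕ)) : ℝ :=
  (π.map (fun p => dist (P p.1) (Q p.2))).sum

/-- The maximum of the weights `ω(i,j) = ‖p_i - q_j‖` of the grid points along a path. -/
noncomputable def pathMax {d : ℕ} (P Q : ℕ → EuclideanSpace ℝ (Fin d))
    (π : List (ℕ × ℕ)) : ℝ :=
  (π.map (fun p => dist (P p.1) (Q p.2))).foldr max 0

/-- Dynamic time warping distance: minimum over admissible paths from `(1,1)` to `(m,n)`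
of the sum of the weights along the path. -/
noncomputable def dtw {d : ℕ} (m n : ℕ) (P Q : ℕ → EuclideanSpace ℝ (Fin d)) : ℝ :=
  sInf {c : ℝ | ∃ π : List (ℕ × ℕ),
    IsAdmissible m n (1, 1) (m, n) π ∧ c = pathCost P Q π}

/-- Discrete Fréchet distance: minimum over admissible paths from `(1,1)` to `(m,n)`
of the maximum of the weights along the path. -/
noncomputable def dfr {d : ℕ} (m n : ℕ) (P Q : ℕ → EuclideanSpace ℝ (Fin d)) : ℝ :=
  sInf {c : ℝ | ∃ π : List (ℕ × ℕ),
    IsAdmissible m n (1, 1) (m, n) π ∧ c = pathMax P Q π}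

/-- A monotone correspondence set covering both sequences: a subset of the grid
`[1..m] × [1..n]` that is monotone and in which every row index `i ∈ [1..m]` and
every column index `j ∈ [1..n]` occurs. -/
def IsMonotoneCorrespondence (m n : ℕ) (C : Finset (ℕ × ℕ)) : Prop :=
  (∀ p ∈ C, InGrid m n p) ∧
  (∀ p ∈ C, ∀ q ∈ C, (p.1 < q.1 → p.2 ≤ q.2) ∧ (p.2 < q.2 → p.1 ≤ q.1)) ∧
  (∀ i, 1 ≤ i → i ≤ m → ∃ j, (i, j) ∈ C) ∧
  (∀ j, 1 ≤ j → j ≤ n → ∃ i, (i, j) ∈ C)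

/-!
A covering monotone correspondence set is exactly a chain of the grid for the product order
that covers every row and column. Its greatest element is `(m, n)`; if `(a, b)` is the greatest of
the remaining points, these form a correspondence set for the grid `[1..a] × [1..b]`, and
`(a, b) → (m, n)` is an admissible step because row `m - 1` and column `n - 1` are still covered.
By induction the chain is the point set of an admissible path. Conversely, an admissible path is
strictly increasing in the product order, so it visits each point once and its points form a
chain, and by a discrete intermediate value argument it meets every row and column. In both
directions the cost of the path is the sum over its point set.
-/

theorem Prod.isChain_le_iff {α β : Type*} [LinearOrder α] [LinearOrder β] {C : Set (α × β)} :
    IsChain (· ≤ ·) C ↔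
      ∀ p ∈ C, ∀ q ∈ C, (p.1 < q.1 → p.2 ≤ q.2) ∧ (p.2 < q.2 → p.1 ≤ q.1) := by
  refine ⟨fun hC p hp q hq => ?_, fun h p hp q hq _ => ?_⟩
  · rcases hC.total hp hq with hpq | hqp
    · exact ⟨fun _ => hpq.2, fun _ => hpq.1⟩
    · exact ⟨fun hlt => absurd hqp.1 hlt.not_ge, fun hlt => absurd hqp.2 hlt.not_ge⟩
  · rcases lt_trichotomy p.1 q.1 with hlt | heq | hgt
    · exact Or.inl ⟨hlt.le, (h p hp q hq).1 hlt⟩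
    · rcases le_total p.2 q.2 with h2 | h2
      · exact Or.inl ⟨heq.le, h2⟩
      · exact Or.inr ⟨heq.ge, h2⟩
    · exact Or.inr ⟨hgt.le, (h q hq p hp).1 hgt⟩

theorem Finset.Nonempty.exists_isGreatest_of_isChain {α : Type*} [Preorder α] {s : Finset α}
    (hs : s.Nonempty) (hc : IsChain (· ≤ ·) (s : Set α)) :
    ∃ g, IsGreatest (s : Set α) g := by
  obtain ⟨g, hg, hmax⟩ := s.exists_maximal hs
  refine ⟨g, hg, fun x hx => ?_⟩
  rcases hc.total hx hg with hxg | hgx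
  · exact hxg
  · exact hmax hx hgx

/-- Discrete intermediate value theorem. -/
theorem List.IsChain.exists_mem_apply_eq {α : Type*} {R : α → α → Prop} (f : α → ℕ)
    (hf : ∀ a b, R a b → f b ≤ f a + 1) {a : α} {l : List α} (hl : (a :: l).IsChain R)
    {k : ℕ} (hak : f a ≤ k) {b : α} (hb : b ∈ a :: l) (hkb : k ≤ f b) :
    ∃ c ∈ a :: l, f c = k := by
  induction l generalizing a with
  | nil =>
    rw [List.mem_singleton.1 hb] at hkb
    exact ⟨a, List.mem_cons_self, by omega⟩
  | cons c l ih =>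
    by_cases hak' : f a = k
    · exact ⟨a, List.mem_cons_self, hak'⟩
    obtain ⟨hac, hl⟩ := List.isChain_cons_cons.1 hl
    have hb' : b ∈ c :: l := by
      rcases List.mem_cons.1 hb with rfl | hb
      · omega
      · exact hb
    obtain ⟨d, hd, hdk⟩ := ih hl (by have := hf a c hac; omega) hb'
    exact ⟨d, List.mem_cons_of_mem a hd, hdk⟩

theorem IsStep.lt {p q : ℕ × ℕ} (h : IsStep p q) : p < q := by
  obtain ⟨h1, h2, hne⟩ := h
  exact lt_of_le_of_ne ⟨by omega, by omega⟩ (Ne.symm hne)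

theorem InGrid.mono {m n m' n' : ℕ} {p : ℕ × ℕ} (hp : InGrid m n p) (hm : m ≤ m')
    (hn : n ≤ n') :
    InGrid m' n' p :=
  ⟨hp.1, hp.2.1.trans hm, hp.2.2.1, hp.2.2.2.trans hn⟩

namespace IsAdmissible

variable {m n : ℕ} {s t : ℕ × ℕ} {π : List (ℕ × ℕ)}

theorem pairwise_lt (h : IsAdmissible m n s t π) : π.Pairwise (· < ·) :=
  (h.2.2.1.imp fun _ _ => IsStep.lt).pairwise

theorem nodup (h : IsAdmissible m n s t π) : π.Nodup :=
  h.pairwise_lt.nodup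

theorem concat {m' n' : ℕ} {u : ℕ × ℕ} (h : IsAdmissible m n s t π) (htu : IsStep t u)
    (hu : InGrid m' n' u) (hm : m ≤ m') (hn : n ≤ n') : IsAdmissible m' n' s u (π ++ [u]) := by
  obtain ⟨hs, ht, hc, hg⟩ := h
  have hne : π ≠ [] := by rintro rfl; simp at hs
  refine ⟨by rwa [List.head?_append_of_ne_nil _ hne], by simp, ?_, ?_⟩
  · refine hc.append (List.isChain_singleton u) fun x hx y hy => ?_
    rw [Option.mem_def, ht, Option.some_inj] at hx
    rw [List.head?_cons, Option.mem_def, Option.some_inj] at hy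
    exact hx ▸ hy ▸ htu
  · intro p hp
    rcases List.mem_append.1 hp with hp | hp
    · exact (hg p hp).mono hm hn
    · rwa [List.mem_singleton.1 hp]

theorem isChain_toFinset (h : IsAdmissible m n s t π) :
    IsChain (· ≤ ·) (π.toFinset : Set (ℕ × ℕ)) := by
  rw [List.coe_toFinset]
  exact @List.Pairwise.set_pairwise _ _ _ (h.pairwise_lt.imp (Or.inl ∘ le_of_lt))
    ⟨fun _ _ => Or.symm⟩

theorem isMonotoneCorrespondence_toFinset (h : IsAdmissible m n (1, 1) (m, n) π) :
    IsMonotoneCorrespondence m n π.toFinset := by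
  have hchain := h.isChain_toFinset
  obtain ⟨hs, ht, hc, hg⟩ := h
  obtain ⟨l, rfl⟩ := List.head?_eq_some_iff.1 hs
  have hlast : (m, n) ∈ (1, 1) :: l := List.mem_of_getLast? ht
  refine ⟨fun p hp => hg p (List.mem_toFinset.1 hp), Prod.isChain_le_iff.1 hchain,
    fun i hi hin => ?_, fun j hj hjn => ?_⟩
  · obtain ⟨c, hc, rfl⟩ := hc.exists_mem_apply_eq Prod.fst
      (fun _ _ hpq => by rcases hpq.1 with h | h <;> omega) hi hlast hin
    exact ⟨c.2, List.mem_toFinset.2 hc⟩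
  · obtain ⟨c, hc, rfl⟩ := hc.exists_mem_apply_eq Prod.snd
      (fun _ _ hpq => by rcases hpq.2.1 with h | h <;> omega) hj hlast hjn
    exact ⟨c.1, List.mem_toFinset.2 hc⟩

end IsAdmissible

theorem pathCost_eq_sum_toFinset {d : ℕ} (P Q : ℕ → EuclideanSpace ℝ (Fin d))
    {π : List (ℕ × ℕ)} (hπ : π.Nodup) :
    pathCost P Q π = ∑ p ∈ π.toFinset, dist (P p.1) (Q p.2) :=
  (List.sum_toFinset _ hπ).symm

namespace IsMonotoneCorrespondence

variable {m n a b : ℕ} {C : Finset (ℕ × ℕ)}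

theorem isChain (hC : IsMonotoneCorrespondence m n C) :
    IsChain (· ≤ ·) (C : Set (ℕ × ℕ)) :=
  Prod.isChain_le_iff.2 hC.2.1

theorem corner_mem (hm : 1 ≤ m) (hn : 1 ≤ n) (hC : IsMonotoneCorrespondence m n C) :
    (m, n) ∈ C := by
  obtain ⟨hg, hmono, hrow, hcol⟩ := hC
  obtain ⟨j, hj⟩ := hrow m hm le_rfl
  obtain ⟨i, hi⟩ := hcol n hn le_rfl
  rcases (hg _ hj).2.2.2.lt_or_eq with hjn | rfl
  · obtain rfl : i = m := le_antisymm (hg _ hi).2.1 ((hmono _ hj _ hi).2 hjn)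
    exact hi
  · exact hj

theorem eq_singleton_of_erase_corner_eq_empty (hm : 1 ≤ m) (hn : 1 ≤ n)
    (hC : IsMonotoneCorrespondence m n C) (h : C.erase (m, n) = ∅) :
    m = 1 ∧ n = 1 ∧ C = {(1, 1)} := by
  have hC₁ : C = {(m, n)} := (Finset.erase_eq_empty_iff _ _).1 h |>.resolve_left
    (Finset.ne_empty_of_mem (hC.corner_mem hm hn))
  obtain ⟨j, hj⟩ := hC.2.2.1 1 le_rfl hm
  obtain ⟨i, hi⟩ := hC.2.2.2 1 le_rfl hn
  rw [hC₁, Finset.mem_singleton, Prod.mk.injEq] at hj hi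
  obtain rfl := hj.1
  obtain rfl := hi.2
  exact ⟨rfl, rfl, hC₁⟩

theorem erase_corner (hC : IsMonotoneCorrespondence m n C)
    (hab : IsGreatest (C.erase (m, n) : Set (ℕ × ℕ)) (a, b)) :
    IsMonotoneCorrespondence a b (C.erase (m, n)) := by
  obtain ⟨hg, hmono, hrow, hcol⟩ := hC
  have habC : (a, b) ∈ C := Finset.mem_of_mem_erase hab.1
  refine ⟨fun p hp => ?_, fun p hp q hq => hmono p (Finset.mem_of_mem_erase hp) q
      (Finset.mem_of_mem_erase hq), fun i hi hia => ?_, fun j hj hjb => ?_⟩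
  · obtain ⟨hp₁, -, hp₂, -⟩ := hg p (Finset.mem_of_mem_erase hp)
    exact ⟨hp₁, (hab.2 hp).1, hp₂, (hab.2 hp).2⟩
  · obtain ⟨j, hj⟩ := hrow i hi (hia.trans (hg _ habC).2.1)
    by_cases hij : (i, j) = (m, n)
    · obtain rfl : i = a := le_antisymm hia ((Prod.mk.inj hij).1 ▸ (hg _ habC).2.1)
      exact ⟨b, hab.1⟩
    · exact ⟨j, Finset.mem_erase.2 ⟨hij, hj⟩⟩
  · obtain ⟨i, hi⟩ := hcol j hj (hjb.trans (hg _ habC).2.2.2)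
    by_cases hij : (i, j) = (m, n)
    · obtain rfl : j = b := le_antisymm hjb ((Prod.mk.inj hij).2 ▸ (hg _ habC).2.2.2)
      exact ⟨a, hab.1⟩
    · exact ⟨i, Finset.mem_erase.2 ⟨hij, hi⟩⟩

theorem isStep_corner (hC : IsMonotoneCorrespondence m n C)
    (hab : IsGreatest (C.erase (m, n) : Set (ℕ × ℕ)) (a, b)) : IsStep (a, b) (m, n) := by
  obtain ⟨hg, -, hrow, hcol⟩ := hC
  obtain ⟨hab_ne, habC⟩ := Finset.mem_erase.1 hab.1
  obtain ⟨-, ham, -, hbn⟩ := hg _ habC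
  have hma : m - 1 ≤ a := by
    rcases Nat.lt_or_ge m 2 with hm | hm
    · omega
    obtain ⟨j, hj⟩ := hrow (m - 1) (by omega) (by omega)
    exact (hab.2 (Finset.mem_erase.2 ⟨by simp; omega, hj⟩)).1
  have hnb : n - 1 ≤ b := by
    rcases Nat.lt_or_ge n 2 with hn | hn
    · omega
    obtain ⟨i, hi⟩ := hcol (n - 1) (by omega) (by omega)
    exact (hab.2 (Finset.mem_erase.2 ⟨by simp; omega, hi⟩)).2
  exact ⟨by omega, by omega, Ne.symm hab_ne⟩

theorem exists_isAdmissible (hm : 1 ≤ m) (hn : 1 ≤ n) (hC : IsMonotoneCorrespondence m n C) :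
    ∃ π, IsAdmissible m n (1, 1) (m, n) π ∧ π.toFinset = C := by
  induction C using Finset.strongInduction generalizing m n with
  | H C ih =>
    have hcorner := hC.corner_mem hm hn
    rcases (C.erase (m, n)).eq_empty_or_nonempty with hempty | hne
    · obtain ⟨rfl, rfl, rfl⟩ := hC.eq_singleton_of_erase_corner_eq_empty hm hn hempty
      exact ⟨[(1, 1)], ⟨rfl, rfl, List.isChain_singleton _, by simp [InGrid]⟩, rfl⟩
    obtain ⟨⟨a, b⟩, hab⟩ :=
      hne.exists_isGreatest_of_isChain (hC.isChain.mono (Finset.erase_subset _ _))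
    have hC' := hC.erase_corner hab
    obtain ⟨ha, -, hb, -⟩ := hC'.1 _ hab.1
    obtain ⟨-, ham, -, hbn⟩ := hC.1 _ (Finset.mem_of_mem_erase hab.1)
    obtain ⟨π, hπ, hπC⟩ := ih _ (Finset.erase_ssubset hcorner) ha hb hC'
    refine ⟨π ++ [(m, n)],
      hπ.concat (hC.isStep_corner hab) ⟨hm, le_rfl, hn, le_rfl⟩ ham hbn, ?_⟩
    rw [List.toFinset_append, hπC, List.toFinset_cons, List.toFinset_nil, insert_empty_eq,
      Finset.union_singleton, Finset.insert_erase hcorner]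

end IsMonotoneCorrespondence

/-- The correspondence formulation and the grid-path formulation of
dynamic time warping coincide. -/
theorem dtw_correspondence_eq_path {d : ℕ} (m n : ℕ) (hm : 1 ≤ m) (hn : 1 ≤ n)
    (P Q : ℕ → EuclideanSpace ℝ (Fin d)) :
    sInf {c : ℝ | ∃ C : Finset (ℕ × ℕ), IsMonotoneCorrespondence m n C ∧
        c = ∑ p ∈ C, dist (P p.1) (Q p.2)} =
      sInf {c : ℝ | ∃ π : List (ℕ × ℕ),
        IsAdmissible m n (1, 1) (m, n) π ∧ c = pathCost P Q π} := by
  congr 1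
  ext c
  constructor
  · rintro ⟨C, hC, rfl⟩
    obtain ⟨π, hπ, rfl⟩ := hC.exists_isAdmissible hm hn
    exact ⟨π, hπ, (pathCost_eq_sum_toFinset P Q hπ.nodup).symm⟩
  · rintro ⟨π, hπ, rfl⟩
    exact ⟨π.toFinset, hπ.isMonotoneCorrespondence_toFinset,
      pathCost_eq_sum_toFinset P Q hπ.nodup⟩
end

section
/- Let P = ⟨p_1,…,p_n⟩ and Q = ⟨q_1,…,q_n⟩ be point sequences in ℝ^d of equal length n and g > 0 a gap penalty. If Σ_{i=1}^n ‖p_i − q_i‖ ≤ g, then ed(P,Q) = Σ_{i=1}^n ‖p_i − q_i‖, i.e., the diagonal (identity) matching is optimal. -/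
/-- The weight of the edge from `s` to `t` in the edit-distance grid graph:
a diagonal step from `(i,j)` to `(i+1,j+1)` costs `‖p_i - q_j‖`, while a
horizontal or vertical step costs the gap penalty `g`. -/
noncomputable def edgeWeight {d : ℕ} (g : ℝ) (P Q : ℕ → EuclideanSpace ℝ (Fin d))
    (s t : ℕ × ℕ) : ℝ :=
  if t.1 = s.1 + 1 ∧ t.2 = s.2 + 1 then dist (P s.1) (Q s.2) else g

/-- The weight of a path: the sum of its edge weights. -/
noncomputable def pathEdgeCost {d : ℕ} (g : ℝ) (P Q : ℕ → EuclideanSpace ℝ (Fin d))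
    (π : List (ℕ × ℕ)) : ℝ :=
  ((π.zip π.tail).map (fun s => edgeWeight g P Q s.1 s.2)).sum

/-- A monotone matching: a monotone set of correspondences in `[1..m] × [1..n]` in
which each row index and each column index occurs at most once. -/
def IsMonotoneMatching (m n : ℕ) (C : Finset (ℕ × ℕ)) : Prop :=
  (∀ p ∈ C, InGrid m n p) ∧
  (∀ p ∈ C, ∀ q ∈ C, (p.1 < q.1 → p.2 ≤ q.2) ∧ (p.2 < q.2 → p.1 ≤ q.1)) ∧
  (∀ p ∈ C, ∀ q ∈ C, p.1 = q.1 → p = q) ∧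
  (∀ p ∈ C, ∀ q ∈ C, p.2 = q.2 → p = q)

/-- Edit distance with gap penalty `g`: the minimum over monotone matchings `C` of
`∑_{(i,j) ∈ C} ‖p_i - q_j‖ + g (m + n - 2 |C|)`. -/
noncomputable def ed {d : ℕ} (g : ℝ) (m n : ℕ) (P Q : ℕ → EuclideanSpace ℝ (Fin d)) : ℝ :=
  sInf {c : ℝ | ∃ C : Finset (ℕ × ℕ), IsMonotoneMatching m n C ∧
    c = (∑ p ∈ C, dist (P p.1) (Q p.2)) + g * ((m : ℝ) + n - 2 * C.card)}

/-!
A monotone matching of `[1..n] × [1..n]` with fewer than `n` pairs pays at least `2g` in gaps,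
which is at least the diagonal cost. One with `n` pairs covers every row and every column,
and monotonicity makes `{q ∈ C | q.1 ≤ i} = {q ∈ C | q.2 ≤ j}` for each `(i, j) ∈ C`; the two
sides have `i` and `j` elements, so `C` is the diagonal.
-/

open Finset

noncomputable def matchingCost {d : ℕ} (g : ℝ) (m n : ℕ) (P Q : ℕ → EuclideanSpace ℝ (Fin d))
    (C : Finset (ℕ × ℕ)) : ℝ :=
  (∑ p ∈ C, dist (P p.1) (Q p.2)) + g * ((m : ℝ) + n - 2 * C.card)

theorem ed_eq_of_isLeast {d : ℕ} {g : ℝ} {m n : ℕ} {P Q : ℕ → EuclideanSpace ℝ (Fin d)} {c : ℝ}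
    (hc : IsLeast (matchingCost g m n P Q '' {C | IsMonotoneMatching m n C}) c) :
    ed g m n P Q = c := by
  rw [ed, ← hc.csInf_eq]
  congr 1
  ext x
  simp only [Set.mem_ofPred_eq, Set.mem_image, matchingCost, eq_comm]

theorem card_filter_le_of_injOn {α : Type*} {s : Finset α} {f : α → ℕ} {m k : ℕ}
    (hf : Set.InjOn f s) (hs : s.image f ⊆ Icc 1 m) (hcard : #s = m) (hk : k ≤ m) :
    #{a ∈ s | f a ≤ k} = k := by
  have himage : s.image f = Icc 1 m :=
    eq_of_subset_of_card_le hs (by rw [card_image_of_injOn hf, hcard, Nat.card_Icc]; omega)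
  have hIcc : {i ∈ Icc 1 m | i ≤ k} = Icc 1 k := by
    ext i
    simp only [mem_filter, mem_Icc]
    omega
  calc #{a ∈ s | f a ≤ k}
      = #({a ∈ s | f a ≤ k}.image f) :=
        (card_image_of_injOn (hf.mono (coe_subset.mpr (filter_subset _ s)))).symm
    _ = #{i ∈ s.image f | i ≤ k} := by rw [filter_image]
    _ = k := by rw [himage, hIcc, Nat.card_Icc]; omega

namespace IsMonotoneMatching

variable {m n : ℕ} {C : Finset (ℕ × ℕ)}

theorem injOn_fst (hC : IsMonotoneMatching m n C) : Set.InjOn Prod.fst (C : Set (ℕ × ℕ)) :=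
  fun p hp q hq => hC.2.2.1 p hp q hq

theorem injOn_snd (hC : IsMonotoneMatching m n C) : Set.InjOn Prod.snd (C : Set (ℕ × ℕ)) :=
  fun p hp q hq => hC.2.2.2 p hp q hq

theorem image_fst_subset (hC : IsMonotoneMatching m n C) : C.image Prod.fst ⊆ Icc 1 m := by
  intro i hi
  obtain ⟨p, hp, rfl⟩ := mem_image.mp hi
  exact mem_Icc.mpr ⟨(hC.1 p hp).1, (hC.1 p hp).2.1⟩

theorem image_snd_subset (hC : IsMonotoneMatching m n C) : C.image Prod.snd ⊆ Icc 1 n := by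
  intro j hj
  obtain ⟨p, hp, rfl⟩ := mem_image.mp hj
  exact mem_Icc.mpr ⟨(hC.1 p hp).2.2.1, (hC.1 p hp).2.2.2⟩

theorem card_le (hC : IsMonotoneMatching m n C) : #C ≤ m := by
  simpa [card_image_of_injOn hC.injOn_fst] using card_le_card hC.image_fst_subset

theorem filter_fst_le_eq_filter_snd_le (hC : IsMonotoneMatching m n C) {p : ℕ × ℕ}
    (hp : p ∈ C) : {q ∈ C | q.1 ≤ p.1} = {q ∈ C | q.2 ≤ p.2} := by
  ext q
  simp only [mem_filter, and_congr_right_iff]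
  intro hq
  constructor
  · intro hle
    rcases hle.lt_or_eq with hlt | heq
    · exact (hC.2.1 q hq p hp).1 hlt
    · exact (congrArg Prod.snd (hC.injOn_fst hq hp heq)).le
  · intro hle
    rcases hle.lt_or_eq with hlt | heq
    · exact (hC.2.1 q hq p hp).2 hlt
    · exact (congrArg Prod.fst (hC.injOn_snd hq hp heq)).le

theorem eq_diag_of_card_eq (hC : IsMonotoneMatching n n C) (hcard : #C = n) :
    C = (Icc 1 n).diag := by
  have hdiag : ∀ p ∈ C, p.1 = p.2 := by
    intro p hp
    have hfst := card_filter_le_of_injOn hC.injOn_fst hC.image_fst_subset hcard (hC.1 p hp).2.1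
    have hsnd := card_filter_le_of_injOn hC.injOn_snd hC.image_snd_subset hcard
      (hC.1 p hp).2.2.2
    rwa [← hC.filter_fst_le_eq_filter_snd_le hp, hfst] at hsnd
  refine eq_of_subset_of_card_le (fun p hp => mem_diag.mpr ⟨?_, hdiag p hp⟩) ?_
  · exact mem_Icc.mpr ⟨(hC.1 p hp).1, (hC.1 p hp).2.1⟩
  · rw [diag_card, hcard, Nat.card_Icc]
    omega

end IsMonotoneMatching

theorem isMonotoneMatching_diag (n : ℕ) : IsMonotoneMatching n n (Icc 1 n).diag := by
  simp only [IsMonotoneMatching, InGrid, mem_diag, mem_Icc]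
  refine ⟨?_, ?_, ?_, ?_⟩ <;>
  · intros
    grind

theorem matchingCost_diag {d : ℕ} (g : ℝ) (n : ℕ) (P Q : ℕ → EuclideanSpace ℝ (Fin d)) :
    matchingCost g n n P Q (Icc 1 n).diag = ∑ i ∈ Icc 1 n, dist (P i) (Q i) := by
  rw [matchingCost, sum_diag, diag_card, Nat.card_Icc]
  push_cast
  ring

theorem ed_eq_diag_general {d : ℕ} (g : ℝ) (n : ℕ)
    (P Q : ℕ → EuclideanSpace ℝ (Fin d))
    (h : ∑ i ∈ Finset.Icc 1 n, dist (P i) (Q i) ≤ g) :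
    ed g n n P Q = ∑ i ∈ Finset.Icc 1 n, dist (P i) (Q i) := by
  set S := ∑ i ∈ Icc 1 n, dist (P i) (Q i)
  have hS : 0 ≤ S := sum_nonneg fun i _ => dist_nonneg
  refine ed_eq_of_isLeast ⟨⟨_, isMonotoneMatching_diag n, matchingCost_diag g n P Q⟩, ?_⟩
  rintro _ ⟨C, hC, rfl⟩
  rcases hC.card_le.lt_or_eq with hlt | heq
  · have hgap : (2 : ℝ) ≤ n + n - 2 * #C := by
      have : (#C : ℝ) + 1 ≤ n := by exact_mod_cast hlt
      linarith
    have hdist : 0 ≤ ∑ p ∈ C, dist (P p.1) (Q p.2) := sum_nonneg fun p _ => dist_nonneg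
    have hpenalty := mul_le_mul_of_nonneg_left hgap (hS.trans h)
    rw [matchingCost]
    linarith
  · rw [hC.eq_diag_of_card_eq heq, matchingCost_diag]

/-- If the two sequences have equal length `n` and the total distance along the diagonal
is at most the gap penalty `g`, then the edit distance equals that total distance,
i.e., the diagonal (identity) matching is optimal. -/
theorem ed_eq_diag {d : ℕ} (g : ℝ) (hg : 0 < g) (n : ℕ) (hn : 1 ≤ n)
    (P Q : ℕ → EuclideanSpace ℝ (Fin d))
    (h : ∑ i ∈ Finset.Icc 1 n, dist (P i) (Q i) ≤ g) :
    ed g n n P Q = ∑ i ∈ Finset.Icc 1 n, dist (P i) (Q i) :=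
  ed_eq_diag_general g n P Q h
end

section
/- Let (a,b) and (i,j) be grid points with a ≤ i, b ≤ j, and i−a ≥ j−b, and let w ≥ 0 and g ≥ 0. Consider admissible paths from (a,b) to (i,j) where each diagonal step (+1,+1) costs w and each horizontal or vertical step costs g. The minimum total cost of such a path equals (j−b)·min(w, 2g) + ((i−a) − (j−b))·g. -/
/-- An admissible path from `s` to `t`. -/
def IsPath (s t : ℕ × ℕ) (π : List (ℕ × ℕ)) : Prop :=
  π.head? = some s ∧ π.getLast? = some t ∧ List.Chain' IsStep π

/-- The cost of a step: a diagonal step `(+1,+1)` costs `w`, a horizontal or vertical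
step costs `g`. -/
def stepCost (w g : ℝ) (s t : ℕ × ℕ) : ℝ :=
  if t.1 = s.1 + 1 ∧ t.2 = s.2 + 1 then w else g

/-- The total cost of a path: the sum of the costs of its steps. -/
def pathStepCost (w g : ℝ) (π : List (ℕ × ℕ)) : ℝ :=
  ((π.zip π.tail).map (fun s => stepCost w g s.1 s.2)).sum

/-!
A path with `d` diagonal, `h` horizontal and `v` vertical steps ends at displacement
`(d + h, d + v)` and costs `d * w + (h + v) * g`. For the displacement `(X, Y)` with `Y ≤ X`
this is `Y * min w (2g) + (X - Y) * g` plus `d * (w - min w (2g)) + (Y - d) * (2g - min w (2g))`,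
so the minimum is reached with `d = Y` if `w ≤ 2g` and with `d = 0` otherwise.
-/

/-- The cost of a path with `d` diagonal, `h` horizontal and `v` vertical steps. -/
def stepsCost (w g : ℝ) (d h v : ℕ) : ℝ := d * w + (h + v) * g

lemma stepsCost_add (w g : ℝ) (d₁ h₁ v₁ d₂ h₂ v₂ : ℕ) :
    stepsCost w g (d₁ + d₂) (h₁ + h₂) (v₁ + v₂) =
      stepsCost w g d₁ h₁ v₁ + stepsCost w g d₂ h₂ v₂ := by
  simp only [stepsCost]; push_cast; ring

lemma pathStepCost_cons_cons (w g : ℝ) (s x : ℕ × ℕ) (l : List (ℕ × ℕ)) :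
    pathStepCost w g (s :: x :: l) = stepCost w g s x + pathStepCost w g (x :: l) := by
  simp [pathStepCost]

lemma IsStep.exists_stepsCost (w g : ℝ) {p q : ℕ × ℕ} (hpq : IsStep p q) :
    ∃ d h v : ℕ, q = (p.1 + (d + h), p.2 + (d + v)) ∧ stepCost w g p q = stepsCost w g d h v := by
  obtain ⟨hx | hx, hy | hy, hne⟩ := hpq
  · exact absurd (Prod.ext hx hy) hne
  · exact ⟨0, 0, 1, Prod.ext (by simp [hx]) (by simp [hy]), by simp [stepCost, stepsCost, hx]⟩
  · exact ⟨0, 1, 0, Prod.ext (by simp [hx]) (by simp [hy]), by simp [stepCost, stepsCost, hy]⟩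
  · exact ⟨1, 0, 0, Prod.ext (by simp [hx]) (by simp [hy]), by simp [stepCost, stepsCost, hx, hy]⟩

lemma IsPath.exists_stepsCost (w g : ℝ) {π : List (ℕ × ℕ)} :
    ∀ {s t : ℕ × ℕ}, IsPath s t π →
      ∃ d h v : ℕ, t = (s.1 + (d + h), s.2 + (d + v)) ∧
        pathStepCost w g π = stepsCost w g d h v := by
  induction π with
  | nil => rintro s t ⟨hs, -, -⟩; simp at hs
  | cons x l ih =>
    rintro s t ⟨hs, ht, hchain⟩
    obtain rfl : x = s := by simpa using hs
    cases l with
    | nil =>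
      obtain rfl : x = t := by simpa using ht
      exact ⟨0, 0, 0, by simp, by simp [pathStepCost, stepsCost]⟩
    | cons y l =>
      obtain ⟨hstep, hrest⟩ := List.isChain_cons_cons.mp hchain
      obtain ⟨d₁, h₁, v₁, rfl, hc₁⟩ := hstep.exists_stepsCost w g
      obtain ⟨d₂, h₂, v₂, rfl, hc₂⟩ := ih ⟨rfl, by rwa [List.getLast?_cons_cons] at ht, hrest⟩
      refine ⟨d₁ + d₂, h₁ + h₂, v₁ + v₂, by ext <;> simp only <;> ring, ?_⟩
      rw [pathStepCost_cons_cons, hc₁, hc₂, stepsCost_add]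

lemma exists_isPath_cons (w g : ℝ) {s s' t : ℕ × ℕ} {c : ℝ} (hs : IsStep s s')
    (hπ : ∃ π, IsPath s' t π ∧ pathStepCost w g π = c) :
    ∃ π, IsPath s t π ∧ pathStepCost w g π = stepCost w g s s' + c := by
  obtain ⟨_ | ⟨x, l⟩, ⟨hhead, hlast, hchain⟩, rfl⟩ := hπ
  · simp at hhead
  obtain rfl : x = s' := by simpa using hhead
  exact ⟨s :: x :: l, ⟨rfl, by rwa [List.getLast?_cons_cons], hchain.cons_cons hs⟩,
    pathStepCost_cons_cons w g s x l⟩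

lemma exists_isPath_stepsCost (w g : ℝ) (d h v : ℕ) (s : ℕ × ℕ) :
    ∃ π, IsPath s (s.1 + (d + h), s.2 + (d + v)) π ∧ pathStepCost w g π = stepsCost w g d h v := by
  induction d generalizing s with
  | succ d ih =>
    convert exists_isPath_cons w g (s := s) (s' := (s.1 + 1, s.2 + 1))
      ⟨Or.inr rfl, Or.inr rfl, by simp [Prod.ext_iff]⟩ (ih _) using 4
    · ext <;> grind
    · rw [stepsCost, stepsCost, stepCost, if_pos ⟨rfl, rfl⟩]; push_cast; ring
  | zero =>
  induction h generalizing s with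
  | succ h ih =>
    convert exists_isPath_cons w g (s := s) (s' := (s.1 + 1, s.2))
      ⟨Or.inr rfl, Or.inl rfl, by simp [Prod.ext_iff]⟩ (ih _) using 4
    · ext <;> grind
    · rw [stepsCost, stepsCost, stepCost, if_neg (by simp)]; push_cast; ring
  | zero =>
  induction v generalizing s with
  | succ v ih =>
    convert exists_isPath_cons w g (s := s) (s' := (s.1, s.2 + 1))
      ⟨Or.inl rfl, Or.inr rfl, by simp [Prod.ext_iff]⟩ (ih _) using 4
    · ext <;> grind
    · rw [stepsCost, stepsCost, stepCost, if_neg (by simp)]; push_cast; ring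
  | zero => exact ⟨[s], ⟨rfl, rfl, List.isChain_singleton s⟩, by simp [pathStepCost, stepsCost]⟩

lemma le_stepsCost {w g : ℝ} (d : ℕ) {h v : ℕ} (hvh : v ≤ h) :
    ((d + v : ℕ) : ℝ) * min w (2 * g) + ((h - v : ℕ) : ℝ) * g ≤ stepsCost w g d h v := by
  have hd : (d : ℝ) * min w (2 * g) ≤ d * w := by gcongr; exact min_le_left _ _
  have hv : (v : ℝ) * min w (2 * g) ≤ v * (2 * g) := by gcongr; exact min_le_right _ _
  rw [stepsCost, Nat.cast_sub hvh]
  push_cast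
  linarith

lemma exists_stepsCost_eq (w g : ℝ) {X Y : ℕ} (hYX : Y ≤ X) :
    ∃ d h v : ℕ, d + h = X ∧ d + v = Y ∧
      stepsCost w g d h v = (Y : ℝ) * min w (2 * g) + ((X - Y : ℕ) : ℝ) * g := by
  rcases le_total w (2 * g) with hw | hw
  · refine ⟨Y, X - Y, 0, by omega, rfl, ?_⟩
    simp [stepsCost, min_eq_left hw]
  · refine ⟨0, X, Y, by omega, by omega, ?_⟩
    rw [stepsCost, min_eq_right hw, Nat.cast_sub hYX]
    push_cast
    ring

theorem min_path_cost_general (a b i j : ℕ) (ha : a ≤ i) (hb : b ≤ j) (hd : j - b ≤ i - a)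
    (w g : ℝ) :
    sInf {c : ℝ | ∃ π : List (ℕ × ℕ), IsPath (a, b) (i, j) π ∧ c = pathStepCost w g π} =
      ((j - b : ℕ) : ℝ) * min w (2 * g) + ((i - a - (j - b) : ℕ) : ℝ) * g := by
  obtain ⟨X, rfl⟩ := Nat.exists_eq_add_of_le ha
  obtain ⟨Y, rfl⟩ := Nat.exists_eq_add_of_le hb
  simp only [Nat.add_sub_cancel_left] at hd ⊢
  refine IsLeast.csInf_eq ⟨?_, ?_⟩
  · obtain ⟨d, h, v, rfl, rfl, hc⟩ := exists_stepsCost_eq w g hd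
    obtain ⟨π, hπ, hcπ⟩ := exists_isPath_stepsCost w g d h v (a, b)
    exact ⟨π, hπ, by rw [hcπ, hc]⟩
  · rintro c ⟨π, hπ, rfl⟩
    obtain ⟨d, h, v, ht, hc⟩ := hπ.exists_stepsCost w g
    simp only [Prod.mk.injEq, add_right_inj] at ht
    obtain ⟨rfl, rfl⟩ := ht
    rw [hc, Nat.add_sub_add_left]
    exact le_stepsCost d (by omega)

/-- If `a ≤ i`, `b ≤ j` and `i - a ≥ j - b`, the minimum total cost of an admissible
path from `(a,b)` to `(i,j)`, where each diagonal step costs `w` and each horizontal or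
vertical step costs `g`, equals `(j - b)·min(w, 2g) + ((i - a) - (j - b))·g`. -/
theorem min_path_cost (a b i j : ℕ) (ha : a ≤ i) (hb : b ≤ j) (hd : j - b ≤ i - a)
    (w g : ℝ) (hw : 0 ≤ w) (hg : 0 ≤ g) :
    sInf {c : ℝ | ∃ π : List (ℕ × ℕ), IsPath (a, b) (i, j) π ∧ c = pathStepCost w g π} =
      ((j - b : ℕ) : ℝ) * min w (2 * g) + ((i - a - (j - b) : ℕ) : ℝ) * g :=
  min_path_cost_general a b i j ha hb hd w g
end

section
/- Let R = [x⁻..x⁺]×[y⁻..y⁺] be a rectangle of grid points with 1 ≤ x⁻ and 1 ≤ y⁻, and let (i,j) be a grid point that hits R, i.e., x⁻ < i ≤ x⁺ and y⁻ < j ≤ y⁺. Then every admissible path from (1,1) to (i,j) contains a grid point (a,b) with either a = x⁻ and y⁻ ≤ b ≤ j, or b = y⁻ and x⁻ ≤ a ≤ i; that is, the path passes through a point of the left or bottom boundary of R that is dominated by (i,j). -/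
/-!
The endpoint `(i, j)` lies in the quadrant of points dominating `(xlo, ylo)`. Unless the path
starts there already (then `xlo = 1` and `(1, 1)` itself qualifies), it enters the quadrant by
some step, and since a step raises each coordinate by at most one, the point it enters at has
first coordinate `xlo` or second coordinate `ylo`. Steps are monotone for the product order, so
every point of the path is dominated by its endpoint `(i, j)`.
-/

namespace List

variable {α : Type*} {l : List α} {s t : α}

theorem IsChain.exists_rel_into_of_head?_of_getLast? {R : α → α → Prop} (D : α → Prop)
    (hl : l.IsChain R) (hs : l.head? = some s) (ht : l.getLast? = some t) (hDs : ¬ D s)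
    (hDt : D t) : ∃ q p, R q p ∧ ¬ D q ∧ D p ∧ p ∈ l := by
  by_contra! hno
  refine IsChain.induction (fun x => ¬ D x) l (IsChain.iff_mem.mp hl)
    (fun x y ⟨_, hy, hxy⟩ hx hDy => hno x y hxy hx hDy hy) (fun hne => ?_) t
    (mem_of_getLast? ht) hDt
  rw [head?_eq_some_head hne, Option.some_inj] at hs
  exact hs ▸ hDs

theorem IsChain.le_of_getLast? [Preorder α] (hl : l.IsChain (· ≤ ·))
    (ht : l.getLast? = some t) : ∀ p ∈ l, p ≤ t := by
  intro p hp
  rw [getLast?_eq_some_getLast (ne_nil_of_mem hp), Option.some_inj] at ht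
  exact ht ▸ hl.pairwise.rel_getLast hp

end List

namespace IsStep

variable {a p q : ℕ × ℕ}

theorem le (h : IsStep p q) : p ≤ q := by
  obtain ⟨h1, h2, _⟩ := h
  exact Prod.mk_le_mk.mpr ⟨by omega, by omega⟩

theorem fst_eq_or_snd_eq_of_not_le_of_le (h : IsStep q p) (hq : ¬ a ≤ q) (hp : a ≤ p) :
    p.1 = a.1 ∨ p.2 = a.2 := by
  obtain ⟨h1, h2, _⟩ := h
  rw [Prod.le_def] at hq hp
  omega

end IsStep

theorem path_through_boundary_general (xlo ylo i j : ℕ)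
    (hx : 1 ≤ xlo)
    (hi₁ : xlo < i) (hj₁ : ylo < j)
    (π : List (ℕ × ℕ)) (hπ : IsPath (1, 1) (i, j) π) :
    ∃ p ∈ π, (p.1 = xlo ∧ ylo ≤ p.2 ∧ p.2 ≤ j) ∨ (p.2 = ylo ∧ xlo ≤ p.1 ∧ p.1 ≤ i) := by
  obtain ⟨hhead, hlast, hchain⟩ := hπ
  by_cases hstart : (xlo, ylo) ≤ (1, 1)
  · refine ⟨(1, 1), List.mem_of_mem_head? hhead, Or.inl ?_⟩
    rw [Prod.mk_le_mk] at hstart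
    omega
  obtain ⟨q, p, hqp, hq, hp, hpπ⟩ := hchain.exists_rel_into_of_head?_of_getLast?
    (fun p => (xlo, ylo) ≤ p) hhead hlast hstart (Prod.mk_le_mk.mpr ⟨hi₁.le, hj₁.le⟩)
  have hpt : p ≤ (i, j) := (hchain.imp fun _ _ h => h.le).le_of_getLast? hlast p hpπ
  refine ⟨p, hpπ, ?_⟩
  have hboundary := hqp.fst_eq_or_snd_eq_of_not_le_of_le hq hp
  rw [Prod.le_def] at hp hpt
  omega

/-- Let `R = [x⁻..x⁺] × [y⁻..y⁺]` be a rectangle of grid points with `1 ≤ x⁻`, `1 ≤ y⁻`,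
and let `(i,j)` hit `R`, i.e., `x⁻ < i ≤ x⁺` and `y⁻ < j ≤ y⁺`. Then every admissible
path from `(1,1)` to `(i,j)` contains a grid point `(a,b)` with either `a = x⁻` and
`y⁻ ≤ b ≤ j`, or `b = y⁻` and `x⁻ ≤ a ≤ i`: the path passes through a point of the left
or bottom boundary of `R` dominated by `(i,j)`. -/
theorem path_through_boundary (xlo xhi ylo yhi i j : ℕ)
    (hx : 1 ≤ xlo) (hy : 1 ≤ ylo)
    (hi₁ : xlo < i) (hi₂ : i ≤ xhi) (hj₁ : ylo < j) (hj₂ : j ≤ yhi)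
    (π : List (ℕ × ℕ)) (hπ : IsPath (1, 1) (i, j) π) :
    ∃ p ∈ π, (p.1 = xlo ∧ ylo ≤ p.2 ∧ p.2 ≤ j) ∨ (p.2 = ylo ∧ xlo ≤ p.1 ∧ p.1 ≤ i) :=
  path_through_boundary_general xlo ylo i j hx hi₁ hj₁ π hπ
end

section
/- Let Q = ⟨q_1,…,q_n⟩ be a point sequence in ℝ^d whose associated polygonal curve γ_Q is κ-packed, let μ > 0, and let ⟨q_{i_1},…,q_{i_k}⟩ be a left μ-simplification of Q. Then for every x ∈ ℝ^d and δ > 0, the number of indices t ∈ [1..k] with q_{i_t} in the closed ball B(x,δ) is at most κ(δ + μ)/μ + 1. -/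
/-!
If `q_{i_t}` lies in `B(x, δ)` and `t ≥ 2`, then `q_{i_{t-1}}` is more than `μ` away from it, so
the polygonal arc of `γ_Q` between the vertices `i_{t-1}` and `i_t` crosses the sphere of radius
`μ` about `q_{i_t}` at some time `w_t`. The pieces `γ_Q([w_t, i_t])` lie in `B(x, δ + μ)`, occupy
pairwise non-overlapping time intervals, and each has length at least `μ`; packedness bounds
their total length by `κ(δ + μ)`. Only `t = 1` can lack such a piece, whence the `+ 1`.
-/

open scoped Classical

theorem Nat.exists_not_and_succ_of_le {p : ℕ → Prop} {a b : ℕ} (hab : a ≤ b)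
    (ha : ¬p a) (hb : p b) : ∃ j, a ≤ j ∧ j < b ∧ ¬p j ∧ p (j + 1) := by
  induction b, hab using Nat.le_induction with
  | base => exact absurd hb ha
  | succ b hab ih =>
    by_cases hpb : p b
    · obtain ⟨j, haj, hjb, hj⟩ := ih hpb
      exact ⟨j, haj, hjb.trans b.lt_succ_self, hj⟩
    · exact ⟨b, hab, b.lt_succ_self, hpb, hb⟩

section Crossing

variable {E : Type*} [SeminormedAddCommGroup E] [NormedSpace ℝ E]

theorem exists_dist_segment_eq {y z p : E} {r : ℝ} (hy : r ≤ dist y p) (hz : dist z p ≤ r) :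
    ∃ s ∈ Set.Icc (0 : ℝ) 1, dist (y + s • (z - y)) p = r := by
  have hcont : Continuous fun s : ℝ => dist (y + s • (z - y)) p := by fun_prop
  exact intermediate_value_Icc' zero_le_one hcont.continuousOn (by simpa using ⟨hz, hy⟩)

theorem exists_dist_polygonal_eq {γ : ℝ → E} {Q : ℕ → E} {n : ℕ}
    (hinterp : ∀ i : ℕ, 1 ≤ i → i < n → ∀ s ∈ Set.Icc (0 : ℝ) 1,
      γ ((i : ℝ) + s) = Q i + s • (Q (i + 1) - Q i))
    {a b : ℕ} (ha : 1 ≤ a) (hab : a ≤ b) (hb : b ≤ n) {p : E} {r : ℝ}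
    (hQa : r < dist (Q a) p) (hQb : dist (Q b) p ≤ r) :
    ∃ w ∈ Set.Icc (a : ℝ) b, dist (γ w) p = r := by
  obtain ⟨j, haj, hjb, hQj, hQj'⟩ :=
    Nat.exists_not_and_succ_of_le (p := fun j => dist (Q j) p ≤ r) hab hQa.not_ge hQb
  obtain ⟨s, hs, hdist⟩ := exists_dist_segment_eq (not_le.mp hQj).le hQj'
  refine ⟨j + s, ⟨?_, ?_⟩, by rwa [hinterp j (ha.trans haj) (hjb.trans_le hb) s hs]⟩
  · have : (a : ℝ) ≤ j := by exact_mod_cast haj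
    linarith [hs.1]
  · have : (j : ℝ) + 1 ≤ b := by exact_mod_cast hjb
    linarith [hs.2]

end Crossing

theorem Finset.sum_edist_le_eVariationOn {ι α E : Type*} [LinearOrder ι] [LinearOrder α]
    [PseudoEMetricSpace E] (T : Finset ι) (f : α → E) {s : Set α} {u v : ι → α}
    (huv : ∀ i ∈ T, u i ≤ v i) (hvu : ∀ i ∈ T, ∀ j ∈ T, i < j → v i ≤ u j)
    (hus : ∀ i ∈ T, u i ∈ s) (hvs : ∀ i ∈ T, v i ∈ s) :
    ∑ i ∈ T, edist (f (u i)) (f (v i)) ≤ eVariationOn f s := by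
  induction T using Finset.induction_on_max generalizing s with
  | empty => simp
  | insert a T hlt ih =>
    have haT : a ∉ T := fun h => (hlt a h).false
    simp only [Finset.mem_insert, forall_eq_or_imp] at huv hvu hus hvs
    rw [Finset.sum_insert haT, add_comm]
    have hbefore : ∑ i ∈ T, edist (f (u i)) (f (v i)) ≤ eVariationOn f (s ∩ Set.Iic (u a)) :=
      ih huv.2 (fun i hi j hj => hvu.2 i hi |>.2 j hj)
        (fun i hi => ⟨hus.2 i hi, (huv.2 i hi).trans ((hvu.2 i hi).1 (hlt i hi))⟩)
        (fun i hi => ⟨hvs.2 i hi, (hvu.2 i hi).1 (hlt i hi)⟩)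
    have hlast : edist (f (u a)) (f (v a)) ≤ eVariationOn f (s ∩ Set.Ici (u a)) :=
      eVariationOn.edist_le f ⟨hus.1, le_rfl⟩ ⟨hvs.1, huv.1⟩
    calc _ ≤ eVariationOn f (s ∩ Set.Iic (u a)) + eVariationOn f (s ∩ Set.Ici (u a)) :=
          add_le_add hbefore hlast
      _ ≤ eVariationOn f (s ∩ Set.Iic (u a) ∪ s ∩ Set.Ici (u a)) :=
          eVariationOn.add_le_union f fun x hx y hy => hx.2.trans hy.2
      _ ≤ eVariationOn f s := eVariationOn.mono f (by simp [Set.union_subset_iff])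

theorem Finset.card_mul_le_of_eVariationOn_le {ι α E : Type*} [LinearOrder ι] [LinearOrder α]
    [PseudoMetricSpace E] (T : Finset ι) (f : α → E) {s : Set α} {u v : ι → α} {μ C : ℝ}
    (huv : ∀ i ∈ T, u i ≤ v i) (hvu : ∀ i ∈ T, ∀ j ∈ T, i < j → v i ≤ u j)
    (hus : ∀ i ∈ T, u i ∈ s) (hvs : ∀ i ∈ T, v i ∈ s)
    (hdist : ∀ i ∈ T, μ ≤ dist (f (u i)) (f (v i)))
    (hC : 0 ≤ C) (hvar : eVariationOn f s ≤ ENNReal.ofReal C) :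
    T.card * μ ≤ C := by
  refine (ENNReal.ofReal_le_ofReal_iff hC).mp ?_
  calc ENNReal.ofReal (T.card * μ) = ENNReal.ofReal (∑ _i ∈ T, μ) := by simp
    _ ≤ ENNReal.ofReal (∑ i ∈ T, dist (f (u i)) (f (v i))) :=
        ENNReal.ofReal_le_ofReal (Finset.sum_le_sum hdist)
    _ = ∑ i ∈ T, edist (f (u i)) (f (v i)) := by
        rw [ENNReal.ofReal_sum_of_nonneg fun _ _ => dist_nonneg]
        simp only [edist_dist]
    _ ≤ eVariationOn f s := T.sum_edist_le_eVariationOn f huv hvu hus hvs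
    _ ≤ ENNReal.ofReal C := hvar

theorem card_mul_le_of_far_jumps {E ι : Type*} [SeminormedAddCommGroup E] [NormedSpace ℝ E]
    [LinearOrder ι] {γ : ℝ → E} {Q : ℕ → E} {n : ℕ}
    (hvertex : ∀ i : ℕ, 1 ≤ i → i ≤ n → γ i = Q i)
    (hinterp : ∀ i : ℕ, 1 ≤ i → i < n → ∀ s ∈ Set.Icc (0 : ℝ) 1,
      γ ((i : ℝ) + s) = Q i + s • (Q (i + 1) - Q i))
    (T : Finset ι) {a b : ι → ℕ} (ha : ∀ t ∈ T, 1 ≤ a t) (hab : ∀ t ∈ T, a t ≤ b t)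
    (hb : ∀ t ∈ T, b t ≤ n) (hba : ∀ t ∈ T, ∀ t' ∈ T, t < t' → b t ≤ a t')
    {x : E} {δ μ C : ℝ} (hμ : 0 ≤ μ) (hfar : ∀ t ∈ T, μ < dist (Q (a t)) (Q (b t)))
    (hball : ∀ t ∈ T, dist (Q (b t)) x ≤ δ) (hC : 0 ≤ C)
    (hvar : eVariationOn γ {u | u ∈ Set.Icc (1 : ℝ) n ∧ γ u ∈ Metric.closedBall x (δ + μ)} ≤
      ENNReal.ofReal C) :
    T.card * μ ≤ C := by
  have hcross : ∀ t ∈ T, ∃ w ∈ Set.Icc (a t : ℝ) (b t), dist (γ w) (Q (b t)) = μ :=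
    fun t ht => exists_dist_polygonal_eq hinterp (ha t ht) (hab t ht) (hb t ht) (hfar t ht)
      (by simpa using hμ)
  choose! w hw hwdist using hcross
  have hγb : ∀ t ∈ T, γ (b t) = Q (b t) := fun t ht =>
    hvertex _ ((ha t ht).trans (hab t ht)) (hb t ht)
  refine T.card_mul_le_of_eVariationOn_le γ (u := w) (v := fun t => (b t : ℝ))
    (fun t ht => (hw t ht).2) (fun t ht t' ht' htt' => ?_) (fun t ht => ?_) (fun t ht => ?_)
    (fun t ht => by rw [hγb t ht, hwdist t ht]) hC hvar
  · exact (Nat.cast_le.2 (hba t ht t' ht' htt')).trans (hw t' ht').1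
  · refine ⟨⟨(Nat.one_le_cast.2 (ha t ht)).trans (hw t ht).1,
      (hw t ht).2.trans (Nat.cast_le.2 (hb t ht))⟩, ?_⟩
    rw [Metric.mem_closedBall]
    linarith [dist_triangle (γ (w t)) (Q (b t)) x, hwdist t ht, hball t ht]
  · refine ⟨⟨Nat.one_le_cast.2 ((ha t ht).trans (hab t ht)), Nat.cast_le.2 (hb t ht)⟩, ?_⟩
    rw [hγb t ht, Metric.mem_closedBall]
    linarith [hball t ht]

theorem Finset.card_le_card_filter_add_one {α : Type*} [DecidableEq α] (S : Finset α)
    (p : α → Prop) [DecidablePred p] (a : α) (h : ∀ t ∈ S, ¬p t → t = a) :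
    S.card ≤ (S.filter p).card + 1 :=
  calc S.card ≤ (insert a (S.filter p)).card := Finset.card_le_card fun t ht =>
        if hp : p t then Finset.mem_insert_of_mem (Finset.mem_filter.2 ⟨ht, hp⟩)
        else h t ht hp ▸ Finset.mem_insert_self t _
    _ ≤ (S.filter p).card + 1 := Finset.card_insert_le a _

theorem left_simplification_ball_count_general {d : ℕ} (n : ℕ)
    (Q : ℕ → EuclideanSpace ℝ (Fin d)) (γ : ℝ → EuclideanSpace ℝ (Fin d))
    (κ μ : ℝ) (hκ : 0 ≤ κ) (hμ : 0 < μ)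
    (hvertex : ∀ i : ℕ, 1 ≤ i → i ≤ n → γ i = Q i)
    (hinterp : ∀ i : ℕ, 1 ≤ i → i < n → ∀ s ∈ Set.Icc (0 : ℝ) 1,
      γ ((i : ℝ) + s) = Q i + s • (Q (i + 1) - Q i))
    (hpacked : ∀ (x : EuclideanSpace ℝ (Fin d)) (r : ℝ), 0 < r →
      eVariationOn γ {u | u ∈ Set.Icc (1 : ℝ) n ∧ γ u ∈ Metric.closedBall x r} ≤
        ENNReal.ofReal (κ * r))
    (k : ℕ) (idx : ℕ → ℕ)
    (hmono : ∀ a b, 1 ≤ a → a < b → b ≤ k → idx a < idx b)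
    (hlo : 1 ≤ idx 1) (hhi : idx k ≤ n)
    (hfar : ∀ t, 2 ≤ t → t ≤ k → μ < dist (Q (idx (t - 1))) (Q (idx t)))
    (x : EuclideanSpace ℝ (Fin d)) (δ : ℝ) (hδ : 0 < δ) :
    ((((Finset.Icc 1 k).filter
        (fun t => Q (idx t) ∈ Metric.closedBall x δ)).card : ℝ)) ≤
      κ * (δ + μ) / μ + 1 := by
  set S := (Finset.Icc 1 k).filter (fun t => Q (idx t) ∈ Metric.closedBall x δ)
  set T := S.filter (2 ≤ ·)
  have hidx : MonotoneOn idx (Set.Icc 1 k) :=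
    StrictMonoOn.monotoneOn fun a ha b hb hab => hmono a b ha.1 hab hb.2
  have hT : ∀ t ∈ T, 2 ≤ t ∧ t ≤ k ∧ dist (Q (idx t)) x ≤ δ := fun t ht => by
    simp only [T, S, Finset.mem_filter, Finset.mem_Icc, Metric.mem_closedBall] at ht
    exact ⟨ht.2, ht.1.1.2, ht.1.2⟩
  have hTμ : T.card * μ ≤ κ * (δ + μ) := by
    refine card_mul_le_of_far_jumps hvertex hinterp T (a := fun t => idx (t - 1)) (b := idx)
      (fun t ht => ?_) (fun t ht => ?_) (fun t ht => ?_) (fun t ht t' ht' htt' => ?_) hμ.le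
      (fun t ht => hfar t (hT t ht).1 (hT t ht).2.1) (fun t ht => (hT t ht).2.2)
      (by positivity) (hpacked x (δ + μ) (by positivity))
    all_goals obtain ⟨h2, hk, -⟩ := hT t ht
    · exact hlo.trans (hidx.mapsTo_Icc ⟨by omega, by omega⟩).1
    · exact hidx ⟨by omega, by omega⟩ ⟨by omega, hk⟩ (by omega)
    · exact (hidx.mapsTo_Icc ⟨by omega, hk⟩).2.trans hhi
    · obtain ⟨h2', hk', -⟩ := hT t' ht'
      exact hidx ⟨by omega, hk⟩ ⟨by omega, by omega⟩ (by omega)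
  have hST : S.card ≤ T.card + 1 := S.card_le_card_filter_add_one _ 1 fun t ht h2 => by
    have := (Finset.mem_Icc.1 (Finset.mem_filter.1 ht).1).1
    omega
  have hTcard : (T.card : ℝ) ≤ κ * (δ + μ) / μ := (le_div_iff₀ hμ).2 hTμ
  have hSTℝ : (S.card : ℝ) ≤ T.card + 1 := by exact_mod_cast hST
  linarith

/-- Let `Q = ⟨q_1, …, q_n⟩` be a point sequence in `ℝ^d` and let `γ : ℝ → ℝ^d` be its
associated polygonal curve, parametrized on `[1, n]` so that `γ(i) = q_i` for integer
`i ∈ [1..n]` and `γ` is the affine interpolation between `q_i` and `q_{i+1}` on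
`[i, i+1]`.  Suppose `γ` is `κ`-packed, i.e., for every `x` and `r > 0` the length
(total variation) of `γ` restricted to the times in `[1, n]` at which it lies in the
closed ball `B(x, r)` is at most `κ·r`.  Let `⟨q_{idx 1}, …, q_{idx k}⟩` be a left
`μ`-simplification of `Q`: the indices `idx 1 < idx 2 < … < idx k` lie in `[1..n]`,
every point strictly between consecutive chosen indices is within distance `μ` of the
earlier chosen point, and consecutive chosen points are more than `μ` apart.  Then for
every `x` and `δ > 0`, the number of `t ∈ [1..k]` with `q_{idx t}` in the closed ball
`B(x, δ)` is at most `κ(δ + μ)/μ + 1`. -/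
theorem left_simplification_ball_count {d : ℕ} (n : ℕ) (hn : 1 ≤ n)
    (Q : ℕ → EuclideanSpace ℝ (Fin d)) (γ : ℝ → EuclideanSpace ℝ (Fin d))
    (κ μ : ℝ) (hκ : 0 ≤ κ) (hμ : 0 < μ)
    (hvertex : ∀ i : ℕ, 1 ≤ i → i ≤ n → γ i = Q i)
    (hinterp : ∀ i : ℕ, 1 ≤ i → i < n → ∀ s ∈ Set.Icc (0 : ℝ) 1,
      γ ((i : ℝ) + s) = Q i + s • (Q (i + 1) - Q i))
    (hpacked : ∀ (x : EuclideanSpace ℝ (Fin d)) (r : ℝ), 0 < r →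
      eVariationOn γ {u | u ∈ Set.Icc (1 : ℝ) n ∧ γ u ∈ Metric.closedBall x r} ≤
        ENNReal.ofReal (κ * r))
    (k : ℕ) (hk : 1 ≤ k) (idx : ℕ → ℕ)
    (hmono : ∀ a b, 1 ≤ a → a < b → b ≤ k → idx a < idx b)
    (hlo : 1 ≤ idx 1) (hhi : idx k ≤ n)
    (hnear : ∀ t, 2 ≤ t → t ≤ k → ∀ j, idx (t - 1) < j → j < idx t →
      dist (Q j) (Q (idx (t - 1))) ≤ μ)
    (hfar : ∀ t, 2 ≤ t → t ≤ k → μ < dist (Q (idx (t - 1))) (Q (idx t)))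
    (x : EuclideanSpace ℝ (Fin d)) (δ : ℝ) (hδ : 0 < δ) :
    ((((Finset.Icc 1 k).filter
        (fun t => Q (idx t) ∈ Metric.closedBall x δ)).card : ℝ)) ≤
      κ * (δ + μ) / μ + 1 :=
  left_simplification_ball_count_general n Q γ κ μ hκ hμ hvertex hinterp hpacked k idx hmono hlo hhi
    hfar x δ hδ
end
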